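/- arXiv:1709.06170 — 9 statements merged into one kernel-verified Lean document; each statement's English description precedes it below -/
import Mathlib

section
/- Let P be a dcpo and let G be a set of preclosure maps on P. Then the set Fix(G) of common fixed points of all maps in G is a closure system in P: for every x in P the set {y ∈ Fix(G) | x ≤ y} has a least element. Moreover, the map sending each x in P to the least element of {y ∈ Fix(G) | x ≤ y} is a closure operator on P, and it is the least closure operator on P lying (pointwise) above every map in G. -/
/-- A dcpo: every nonempty directed subset has a least upper bound. -/
def IsDcpo (P : Type*) [PartialOrder P] : Prop :=
  ∀ D : Set P, D.Nonempty → DirectedOn (· ≤ ·) D → ∃ s, IsLUB D s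

/-- A preclosure map: monotone and inflationary. -/
def IsPreclosure {P : Type*} [PartialOrder P] (f : P → P) : Prop :=
  Monotone f ∧ ∀ x, x ≤ f x

/-- A closure operator: monotone, inflationary, idempotent. -/
def IsClosureOp {P : Type*} [PartialOrder P] (f : P → P) : Prop :=
  Monotone f ∧ (∀ x, x ≤ f x) ∧ ∀ x, f (f x) = f x

/-- Common fixed points of a set of maps. -/
def FixSet {P : Type*} (G : Set (P → P)) : Set P := {x | ∀ g ∈ G, g x = x}

/-!
Fix `x`. The elements lying above `x` and below every common fixed point above `x` form a
set that is closed under sups of nonempty chains and under every `g ∈ G` (a preclosure map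
sends a lower bound of its fixed points to another one). By Zorn's lemma it has a maximal
element `m`; since `m ≤ g m` stays in the set, `m` is fixed by all of `G`, hence it is the
least common fixed point above `x`. Minimality among closure operators holds because a closure
operator `k` above every `g ∈ G` takes its values in `FixSet G`: `g (k x) ≤ k (k x) = k x`.
-/

section

variable {P : Type*} [PartialOrder P]

theorem IsDcpo.exists_le_maximal (hP : IsDcpo P) {S : Set P}
    (hS : ∀ c ⊆ S, c.Nonempty → IsChain (· ≤ ·) c → ∀ s, IsLUB c s → s ∈ S)
    {x : P} (hx : x ∈ S) : ∃ m, x ≤ m ∧ Maximal (· ∈ S) m := by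
  refine zorn_le_nonempty₀ S (fun c hcS hc y hy => ?_) x hx
  obtain ⟨s, hs⟩ := hP c ⟨y, hy⟩ hc.directedOn
  exact ⟨s, hS c hcS ⟨y, hy⟩ hc s hs, hs.1⟩

theorem Monotone.apply_le_of_le_of_isFixedPt {f : P → P} (hf : Monotone f) {x y : P}
    (hxy : x ≤ y) (hy : Function.IsFixedPt f y) : f x ≤ y :=
  hy ▸ hf hxy

def fixSetLowerBoundsAbove (G : Set (P → P)) (x : P) : Set P :=
  Set.Ici x ∩ lowerBounds {y | y ∈ FixSet G ∧ x ≤ y}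

theorem self_mem_fixSetLowerBoundsAbove (G : Set (P → P)) (x : P) :
    x ∈ fixSetLowerBoundsAbove G x :=
  ⟨le_rfl, fun _ hz => hz.2⟩

theorem isLUB_mem_fixSetLowerBoundsAbove {G : Set (P → P)} {x : P} {c : Set P}
    (hc : c ⊆ fixSetLowerBoundsAbove G x) (hne : c.Nonempty) {s : P} (hs : IsLUB c s) :
    s ∈ fixSetLowerBoundsAbove G x := by
  obtain ⟨y, hy⟩ := hne
  exact ⟨(hc hy).1.trans (hs.1 hy), fun _ hz => hs.2 fun _ hw => (hc hw).2 hz⟩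

theorem apply_mem_fixSetLowerBoundsAbove {G : Set (P → P)} {x y : P} {g : P → P} (hg : g ∈ G)
    (hgc : IsPreclosure g) (hy : y ∈ fixSetLowerBoundsAbove G x) :
    g y ∈ fixSetLowerBoundsAbove G x :=
  ⟨hy.1.trans (hgc.2 y), fun _ hz => hgc.1.apply_le_of_le_of_isFixedPt (hy.2 hz) (hz.1 g hg)⟩

theorem IsDcpo.exists_isLeast_fixSet (hP : IsDcpo P) {G : Set (P → P)}
    (hG : ∀ g ∈ G, IsPreclosure g) (x : P) : ∃ m, IsLeast {y | y ∈ FixSet G ∧ x ≤ y} m := by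
  obtain ⟨m, -, hm⟩ := hP.exists_le_maximal
    (fun _ hc hne _ _ hs => isLUB_mem_fixSetLowerBoundsAbove hc hne hs)
    (self_mem_fixSetLowerBoundsAbove G x)
  have hmG : m ∈ FixSet G := fun g hg =>
    hm.eq_of_ge (apply_mem_fixSetLowerBoundsAbove hg (hG g hg) hm.prop) ((hG g hg).2 m)
  exact ⟨m, ⟨hmG, hm.prop.1⟩, hm.prop.2⟩

theorem isClosureOp_of_isLeast {C : Set P} {h : P → P}
    (hh : ∀ x, IsLeast {y | y ∈ C ∧ x ≤ y} (h x)) : IsClosureOp h :=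
  ⟨fun _ b hab => (hh _).2 ⟨(hh b).1.1, hab.trans (hh b).1.2⟩,
    fun x => (hh x).1.2,
    fun x => le_antisymm ((hh (h x)).2 ⟨(hh x).1.1, le_rfl⟩) (hh (h x)).1.2⟩

theorem IsClosureOp.apply_mem_fixSet {k : P → P} (hk : IsClosureOp k) {G : Set (P → P)}
    (hG : ∀ g ∈ G, ∀ x, x ≤ g x) (hGk : ∀ g ∈ G, ∀ x, g x ≤ k x) (x : P) :
    k x ∈ FixSet G := fun g hg =>
  le_antisymm ((hGk g hg (k x)).trans (hk.2.2 x).le) (hG g hg (k x))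

end

theorem stmt0 {P : Type*} [PartialOrder P] (hP : IsDcpo P)
    (G : Set (P → P)) (hG : ∀ g ∈ G, IsPreclosure g) :
    (∀ x : P, ∃ m, IsLeast {y | y ∈ FixSet G ∧ x ≤ y} m) ∧
    ∀ h : P → P, (∀ x, IsLeast {y | y ∈ FixSet G ∧ x ≤ y} (h x)) →
      IsClosureOp h ∧ (∀ g ∈ G, ∀ x, g x ≤ h x) ∧
      ∀ k : P → P, IsClosureOp k → (∀ g ∈ G, ∀ x, g x ≤ k x) → ∀ x, h x ≤ k x := by
  refine ⟨hP.exists_isLeast_fixSet hG, fun h hh => ⟨isClosureOp_of_isLeast hh, ?_, ?_⟩⟩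
  · exact fun g hg x => (hG g hg).1.apply_le_of_le_of_isFixedPt (hh x).1.2 ((hh x).1.1 g hg)
  · intro k hk hGk x
    exact (hh x).2 ⟨hk.apply_mem_fixSet (fun g hg => (hG g hg).2) hGk x, hk.2.1 x⟩
end

section
/- (Induction principle.) Let P be a dcpo, let G be a set of preclosure maps on P, and let h be the closure operator on P sending each x to the least common fixed point of G above x. If a subset A of P is closed under least upper bounds of its nonempty directed subsets (i.e., for every nonempty directed D ⊆ A, the least upper bound of D in P belongs to A) and is closed under every map in G (g(A) ⊆ A for all g ∈ G), then A is closed under h: h(A) ⊆ A. -/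
/-! Inside `A ∩ Iic (h x)`, which is closed under directed suprema, Zorn's lemma gives a maximal
element `m ≥ x`. Every `g ∈ G` maps this set into itself because `g (h x) = h x`, so maximality
and `m ≤ g m` force `g m = m`. Hence `m` is a common fixed point above `x`, and `m = h x`. -/

open Set

theorem IsDcpo.exists_le_maximal_of_dirSupClosed {P : Type*} [PartialOrder P] (hP : IsDcpo P)
    {S : Set P} (hS : DirSupClosed S) {x : P} (hx : x ∈ S) :
    ∃ m, x ≤ m ∧ Maximal (· ∈ S) m := by
  refine zorn_le_nonempty₀ S (fun c hcS hc y hy => ?_) x hx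
  obtain ⟨s, hs⟩ := hP c ⟨y, hy⟩ hc.directedOn
  exact ⟨s, hS hcS ⟨y, hy⟩ hc.directedOn hs, fun z hz => hs.1 hz⟩

theorem IsPreclosure.apply_eq_self_of_maximal_inter_Iic {P : Type*} [PartialOrder P] {g : P → P}
    (hg : IsPreclosure g) {A : Set P} (hA : ∀ x ∈ A, g x ∈ A) {b : P} (hb : g b = b) {m : P}
    (hm : Maximal (· ∈ A ∩ Iic b) m) : g m = m := by
  have hgm : g m ∈ A ∩ Iic b := ⟨hA m hm.prop.1, hb ▸ hg.1 hm.prop.2⟩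
  exact le_antisymm (hm.2 hgm (hg.2 m)) (hg.2 m)

theorem stmt1 {P : Type*} [PartialOrder P] (hP : IsDcpo P)
    (G : Set (P → P)) (hG : ∀ g ∈ G, IsPreclosure g)
    (h : P → P) (hh : ∀ x, IsLeast {y | y ∈ FixSet G ∧ x ≤ y} (h x))
    (A : Set P)
    (hdir : ∀ D : Set P, D ⊆ A → D.Nonempty → DirectedOn (· ≤ ·) D →
      ∀ s, IsLUB D s → s ∈ A)
    (hclosed : ∀ g ∈ G, ∀ x ∈ A, g x ∈ A) :
    ∀ x ∈ A, h x ∈ A := by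
  intro x hx
  have hA : DirSupClosed A := fun D hDA hD hDdir s hs => hdir D hDA hD hDdir s hs
  obtain ⟨m, hxm, hm⟩ := hP.exists_le_maximal_of_dirSupClosed
    (hA.inter (dirSupClosed_Iic (h x))) (show x ∈ A ∩ Iic (h x) from ⟨hx, (hh x).1.2⟩)
  have hmfix : m ∈ FixSet G := fun g hg =>
    (hG g hg).apply_eq_self_of_maximal_inter_Iic (hclosed g hg) ((hh x).1.1 g hg) hm
  have hmx : m = h x := le_antisymm hm.prop.2 ((hh x).2 ⟨hmfix, hxm⟩)
  exact hmx ▸ hm.prop.1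
end

section
/- (Tarski's fixed point theorem for dcpos.) Let f be a monotone endofunction on a dcpo P. Then: (i) for every x ∈ P with x ≤ f(x) there exists a least fixed point of f above x, i.e., the set {y ∈ P | f(y) = y and x ≤ y} has a least element; (ii) every nonempty directed subset of the fixed-point set Fix(f) has a least upper bound within the subposet Fix(f); (iii) if P has a least element, then f has a least fixed point. -/
section

variable {P : Type*} [PartialOrder P]

lemma Monotone.le_map_of_isLUB {f : P → P} (hf : Monotone f) {D : Set P} {s : P}
    (hs : IsLUB D s) (hD : ∀ y ∈ D, y ≤ f y) : s ≤ f s :=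
  hs.2 fun y hy => (hD y hy).trans (hf (hs.1 hy))

lemma IsDcpo.exists_isLeast_fixed_ge (hP : IsDcpo P) {f : P → P} (hf : Monotone f) {x : P}
    (hx : x ≤ f x) : ∃ m, IsLeast {y | f y = y ∧ x ≤ y} m := by
  set S := {y | x ≤ y ∧ y ≤ f y ∧ y ∈ lowerBounds {z | f z = z ∧ x ≤ z}}
  have hchain : ∀ c ⊆ S, IsChain (· ≤ ·) c → ∀ y ∈ c, ∃ ub ∈ S, ∀ z ∈ c, z ≤ ub := by
    intro c hcS hc y hy
    obtain ⟨s, hs⟩ := hP c ⟨y, hy⟩ hc.directedOn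
    refine ⟨s, ⟨(hcS hy).1.trans (hs.1 hy), hf.le_map_of_isLUB hs fun w hw => (hcS hw).2.1,
      fun z hz => hs.2 fun w hw => (hcS hw).2.2 hz⟩, hs.1⟩
  obtain ⟨m, -, ⟨hxm, hmf, hm_le⟩, hmax⟩ :=
    zorn_le_nonempty₀ S hchain x ⟨le_rfl, hx, fun _ hz => hz.2⟩
  have hfm : f m ∈ S :=
    ⟨hxm.trans hmf, hf hmf, fun z hz => hz.1 ▸ hf (hm_le hz)⟩
  have hfix : f m = m := le_antisymm (hmax hfm hmf) hmf
  exact ⟨m, ⟨hfix, hxm⟩, fun _ hz => hm_le hz⟩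

end

theorem stmt5 {P : Type*} [PartialOrder P] (hP : IsDcpo P)
    (f : P → P) (hf : Monotone f) :
    (∀ x : P, x ≤ f x → ∃ m, IsLeast {y | f y = y ∧ x ≤ y} m) ∧
    (∀ D : Set P, D ⊆ {y | f y = y} → D.Nonempty → DirectedOn (· ≤ ·) D →
      ∃ s : P, f s = s ∧ (∀ y ∈ D, y ≤ s) ∧
        ∀ z : P, f z = z → (∀ y ∈ D, y ≤ z) → s ≤ z) ∧
    ((∃ b : P, ∀ x : P, b ≤ x) → ∃ m, IsLeast {y | f y = y} m) := by
  refine ⟨fun x hx => hP.exists_isLeast_fixed_ge hf hx, fun D hD hne hdir => ?_, ?_⟩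
  · obtain ⟨s, hs⟩ := hP D hne hdir
    obtain ⟨m, ⟨hfm, hsm⟩, hleast⟩ :=
      hP.exists_isLeast_fixed_ge hf (hf.le_map_of_isLUB hs fun y hy => (hD hy).ge)
    exact ⟨m, hfm, fun y hy => (hs.1 hy).trans hsm, fun z hz hDz => hleast ⟨hz, hs.2 hDz⟩⟩
  · rintro ⟨b, hb⟩
    obtain ⟨m, ⟨hfm, -⟩, hleast⟩ := hP.exists_isLeast_fixed_ge hf (hb (f b))
    exact ⟨m, hfm, fun z hz => hleast ⟨hz, hb z⟩⟩
end

section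
/- Let P be a dcpo, let G be a set of Scott-continuous preclosure maps on P, and let G* be the set of all finite composites of members of G (including the identity map of P). Then for every x ∈ P the set {u(x) | u ∈ G*} is directed and has a least upper bound; the function h defined by h(x) = ⋁{u(x) | u ∈ G*} is a Scott-continuous closure operator on P; h is the least closure operator on P above every map in G; and Fix(h) equals the set of common fixed points of G. -/
/-- Scott continuity. -/
def IsScottContinuous {P Q : Type*} [PartialOrder P] [PartialOrder Q]
    (f : P → Q) : Prop :=
  ∀ D : Set P, D.Nonempty → DirectedOn (· ≤ ·) D → ∀ s, IsLUB D s → IsLUB (f '' D) (f s)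

/-- All finite composites of members of `G`, including the identity. -/
def Composites {P : Type*} (G : Set (P → P)) : Set (P → P) :=
  {u | ∃ l : List (P → P), (∀ f ∈ l, f ∈ G) ∧ u = l.foldr (· ∘ ·) id}


/-!
Every composite of preclosure maps is again a preclosure map, and the composites of `G`
form a monoid, so the orbit `{u x | u ∈ G*}` is directed: `u x` and `v x` are both below
`u (v x)`. Its supremum `h x` is a closure operator because each composite `u` is Scott
continuous and therefore commutes with the directed supremum defining `h x`, giving
`u (h x) ≤ h x`; the same interchange of suprema gives Scott continuity of `h`.
-/

theorem isScottContinuous_iff_scottContinuous {P Q : Type*} [PartialOrder P] [PartialOrder Q]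
    {f : P → Q} : IsScottContinuous f ↔ ScottContinuous f :=
  ⟨fun hf _ hne hdir _ hs => hf _ hne hdir _ hs, fun hf _ hne hdir _ hs => hf hne hdir hs⟩

theorem IsPreclosure.comp {P : Type*} [PartialOrder P] {f g : P → P}
    (hf : IsPreclosure f) (hg : IsPreclosure g) : IsPreclosure (f ∘ g) :=
  ⟨hf.1.comp hg.1, fun x => (hg.2 x).trans (hf.2 (g x))⟩

namespace Composites

variable {P : Type*} {G : Set (P → P)}

theorem id_mem : id ∈ Composites G :=
  ⟨[], by simp, rfl⟩

theorem comp_mem {u v : P → P} (hu : u ∈ Composites G) (hv : v ∈ Composites G) :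
    u ∘ v ∈ Composites G := by
  obtain ⟨l₁, hl₁, rfl⟩ := hu
  obtain ⟨l₂, hl₂, rfl⟩ := hv
  refine ⟨l₁ ++ l₂, fun f hf => (List.mem_append.1 hf).elim (hl₁ f) (hl₂ f), ?_⟩
  rw [List.foldr_append]
  induction l₁ with
  | nil => rfl
  | cons a t ih =>
    simp only [List.foldr_cons, Function.comp_assoc]
    rw [ih fun f hf => hl₁ f (List.mem_cons_of_mem a hf)]

theorem of_mem {g : P → P} (hg : g ∈ G) : g ∈ Composites G :=
  ⟨[g], by simpa using hg, rfl⟩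

@[elab_as_elim]
theorem induction {p : (P → P) → Prop} (h_id : p id) (h_comp : ∀ g ∈ G, ∀ u, p u → p (g ∘ u))
    {u : P → P} (hu : u ∈ Composites G) : p u := by
  obtain ⟨l, hl, rfl⟩ := hu
  induction l with
  | nil => exact h_id
  | cons a t ih =>
    exact h_comp a (hl a List.mem_cons_self) _ (ih fun f hf => hl f (List.mem_cons_of_mem a hf))

theorem isPreclosure [PartialOrder P] (hG : ∀ g ∈ G, IsPreclosure g) {u : P → P}
    (hu : u ∈ Composites G) : IsPreclosure u :=
  induction ⟨monotone_id, fun _ => le_rfl⟩ (fun g hg _ hu => (hG g hg).comp hu) hu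

theorem isScottContinuous [PartialOrder P] (hG : ∀ g ∈ G, IsScottContinuous g) {u : P → P}
    (hu : u ∈ Composites G) : IsScottContinuous u := by
  simp only [isScottContinuous_iff_scottContinuous] at hG ⊢
  exact induction ScottContinuous.id (fun g hg _ hu => hu.comp (hG g hg)) hu

theorem apply_le_of_isClosureOp [PartialOrder P] {k : P → P} (hk : IsClosureOp k)
    (hGk : ∀ g ∈ G, ∀ x, g x ≤ k x) {u : P → P} (hu : u ∈ Composites G) (x : P) : u x ≤ k x :=
  induction (p := fun u => u x ≤ k x) (hk.2.1 x)
    (fun g hg u hux => calc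
      g (u x) ≤ k (u x) := hGk g hg (u x)
      _ ≤ k (k x) := hk.1 hux
      _ = k x := hk.2.2 x) hu

theorem apply_eq_of_mem_fixSet {x : P} (hx : x ∈ FixSet G) {u : P → P}
    (hu : u ∈ Composites G) : u x = x :=
  induction (p := fun u => u x = x) rfl (fun g hg u hux => by simp [hux, hx g hg]) hu

end Composites

def compositeOrbit {P : Type*} (G : Set (P → P)) (x : P) : Set P :=
  {y | ∃ u ∈ Composites G, u x = y}

theorem self_mem_compositeOrbit {P : Type*} {G : Set (P → P)} (x : P) :
    x ∈ compositeOrbit G x :=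
  ⟨id, Composites.id_mem, rfl⟩

section Orbit

variable {P : Type*} [PartialOrder P] {G : Set (P → P)}

theorem directedOn_compositeOrbit (hG : ∀ g ∈ G, IsPreclosure g) (x : P) :
    DirectedOn (· ≤ ·) (compositeOrbit G x) := by
  rintro _ ⟨u, hu, rfl⟩ _ ⟨v, hv, rfl⟩
  exact ⟨u (v x), ⟨u ∘ v, Composites.comp_mem hu hv, rfl⟩,
    (Composites.isPreclosure hG hu).1 ((Composites.isPreclosure hG hv).2 x),
    (Composites.isPreclosure hG hu).2 (v x)⟩

variable {h : P → P} (hh : ∀ x, IsLUB (compositeOrbit G x) (h x))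
include hh

theorem self_le_of_isLUB_compositeOrbit (x : P) : x ≤ h x :=
  (hh x).1 (self_mem_compositeOrbit x)

theorem apply_le_of_isLUB_compositeOrbit {u : P → P} (hu : u ∈ Composites G) (x : P) :
    u x ≤ h x :=
  (hh x).1 ⟨u, hu, rfl⟩

theorem monotone_of_isLUB_compositeOrbit (hG : ∀ g ∈ G, IsPreclosure g) : Monotone h := by
  intro x y hxy
  refine (hh x).2 ?_
  rintro _ ⟨u, hu, rfl⟩
  exact ((Composites.isPreclosure hG hu).1 hxy).trans (apply_le_of_isLUB_compositeOrbit hh hu y)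

theorem apply_le_of_isLUB_of_isScottContinuous {u : P → P} (hu : u ∈ Composites G)
    (hus : IsScottContinuous u) {D : Set P} (hD : D.Nonempty) (hdir : DirectedOn (· ≤ ·) D)
    {s b : P} (hs : IsLUB D s) (hb : ∀ d ∈ D, h d ≤ b) : u s ≤ b := by
  refine (hus D hD hdir s hs).2 ?_
  rintro _ ⟨d, hd, rfl⟩
  exact (apply_le_of_isLUB_compositeOrbit hh hu d).trans (hb d hd)

theorem isClosureOp_of_isLUB_compositeOrbit
    (hG : ∀ g ∈ G, IsPreclosure g ∧ IsScottContinuous g) : IsClosureOp h := by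
  have hpre : ∀ g ∈ G, IsPreclosure g := fun g hg => (hG g hg).1
  refine ⟨monotone_of_isLUB_compositeOrbit hh hpre, self_le_of_isLUB_compositeOrbit hh,
    fun x => le_antisymm ((hh (h x)).2 ?_) (self_le_of_isLUB_compositeOrbit hh (h x))⟩
  rintro _ ⟨u, hu, rfl⟩
  refine apply_le_of_isLUB_of_isScottContinuous hh hu
    (Composites.isScottContinuous (fun g hg => (hG g hg).2) hu)
    ⟨x, self_mem_compositeOrbit x⟩ (directedOn_compositeOrbit hpre x) (hh x) ?_
  rintro _ ⟨v, hv, rfl⟩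
  exact (hh (v x)).2 fun _ ⟨w, hw, hwv⟩ =>
    hwv ▸ apply_le_of_isLUB_compositeOrbit hh (Composites.comp_mem hw hv) x

theorem isScottContinuous_of_isLUB_compositeOrbit
    (hG : ∀ g ∈ G, IsPreclosure g ∧ IsScottContinuous g) : IsScottContinuous h := by
  intro D hD hdir s hs
  refine ⟨?_, fun b hb => (hh s).2 ?_⟩
  · rintro _ ⟨d, hd, rfl⟩
    exact monotone_of_isLUB_compositeOrbit hh (fun g hg => (hG g hg).1) (hs.1 hd)
  · rintro _ ⟨u, hu, rfl⟩
    exact apply_le_of_isLUB_of_isScottContinuous hh hu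
      (Composites.isScottContinuous (fun g hg => (hG g hg).2) hu) hD hdir hs
      fun d hd => hb ⟨d, hd, rfl⟩

theorem le_of_isClosureOp_of_isLUB_compositeOrbit {k : P → P} (hk : IsClosureOp k)
    (hGk : ∀ g ∈ G, ∀ x, g x ≤ k x) (x : P) : h x ≤ k x :=
  (hh x).2 fun _ ⟨_, hu, huy⟩ => huy ▸ Composites.apply_le_of_isClosureOp hk hGk hu x

theorem setOf_apply_eq_self_eq_fixSet_of_isLUB_compositeOrbit (hG : ∀ g ∈ G, IsPreclosure g) :
    {x | h x = x} = FixSet G := by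
  ext x
  constructor
  · intro hx g hg
    exact le_antisymm
      ((apply_le_of_isLUB_compositeOrbit hh (Composites.of_mem hg) x).trans_eq hx) ((hG g hg).2 x)
  · intro hx
    refine le_antisymm ((hh x).2 ?_) (self_le_of_isLUB_compositeOrbit hh x)
    rintro _ ⟨u, hu, rfl⟩
    exact (Composites.apply_eq_of_mem_fixSet hx hu).le

end Orbit

theorem stmt8 {P : Type*} [PartialOrder P] (hP : IsDcpo P)
    (G : Set (P → P)) (hG : ∀ g ∈ G, IsPreclosure g ∧ IsScottContinuous g) :
    (∀ x : P, DirectedOn (· ≤ ·) {y | ∃ u ∈ Composites G, u x = y} ∧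
      ∃ s, IsLUB {y | ∃ u ∈ Composites G, u x = y} s) ∧
    ∀ h : P → P, (∀ x, IsLUB {y | ∃ u ∈ Composites G, u x = y} (h x)) →
      IsClosureOp h ∧ IsScottContinuous h ∧
      (∀ g ∈ G, ∀ x, g x ≤ h x) ∧
      (∀ k : P → P, IsClosureOp k → (∀ g ∈ G, ∀ x, g x ≤ k x) → ∀ x, h x ≤ k x) ∧
      {x | h x = x} = FixSet G := by
  have hpre : ∀ g ∈ G, IsPreclosure g := fun g hg => (hG g hg).1
  refine ⟨fun x => ?_, fun h hh => ?_⟩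
  · have hdir := directedOn_compositeOrbit hpre x
    exact ⟨hdir, hP _ ⟨x, self_mem_compositeOrbit x⟩ hdir⟩
  · exact ⟨isClosureOp_of_isLUB_compositeOrbit hh hG,
      isScottContinuous_of_isLUB_compositeOrbit hh hG,
      fun g hg => apply_le_of_isLUB_compositeOrbit hh (Composites.of_mem hg),
      fun k hk hGk => le_of_isClosureOp_of_isLUB_compositeOrbit hh hk hGk,
      setOf_apply_eq_self_eq_fixSet_of_isLUB_compositeOrbit hh hpre⟩
end

section
/- Let P be a domain and let γ be a closure operator on P. For each x ∈ P the set γ(⇟x) = {γ(u) | u ≪ x} is directed; define γ°(x) = ⋁γ(⇟x). Then γ° is a Scott-continuous closure operator on P, γ° ≤ γ pointwise, and every Scott-continuous closure operator β on P with β ≤ γ satisfies β ≤ γ°. In other words, γ° is the greatest Scott-continuous closure operator below γ (the Scott-continuous core of γ). -/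
/-- The way-below relation. -/
def WayBelow {P : Type*} [PartialOrder P] (x y : P) : Prop :=
  ∀ D : Set P, D.Nonempty → DirectedOn (· ≤ ·) D → ∀ s, IsLUB D s → y ≤ s → ∃ d ∈ D, x ≤ d

/-- A domain: a continuous dcpo. -/
def IsContinuousDcpo (P : Type*) [PartialOrder P] : Prop :=
  IsDcpo P ∧ ∀ x : P, {u | WayBelow u x}.Nonempty ∧
    DirectedOn (· ≤ ·) {u | WayBelow u x} ∧ IsLUB {u | WayBelow u x} x

/-!
Every `γ u` with `u ≪ x` lies below `γ x`, which gives `γ° ≤ γ`. Idempotence of `γ°` comes from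
`v ≪ γ° x = ⋁ γ(⇟x)` forcing `v ≤ γ u` for some `u ≪ x`, and then `γ v ≤ γ (γ u) = γ u`.
Scott continuity rests on the interpolation property of `≪` in a continuous poset: if `u ≪ ⋁ D`,
pick `u ≪ w ≪ ⋁ D`, so `w ≤ d` for some `d ∈ D` and `γ u ≤ γ° d`. Finally, a Scott-continuous
`β ≤ γ` satisfies `β x = ⋁ β(⇟x) ≤ ⋁ γ(⇟x)`.
-/

def IsContinuousPoset (P : Type*) [PartialOrder P] : Prop :=
  ∀ x : P, {u | WayBelow u x}.Nonempty ∧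
    DirectedOn (· ≤ ·) {u | WayBelow u x} ∧ IsLUB {u | WayBelow u x} x

namespace WayBelow

variable {P : Type*} [PartialOrder P] {u v x y : P}

theorem le (h : WayBelow u x) : u ≤ x := by
  obtain ⟨d, rfl, hud⟩ := h {x} (Set.singleton_nonempty x) (directedOn_singleton x) x
    isLUB_singleton le_rfl
  exact hud

theorem mono_right (h : WayBelow u x) (hxy : x ≤ y) : WayBelow u y :=
  fun D hne hdir s hs hys => h D hne hdir s hs (hxy.trans hys)

theorem mono_left (hvu : v ≤ u) (h : WayBelow u x) : WayBelow v x :=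
  fun D hne hdir s hs hxs => (h D hne hdir s hs hxs).imp fun _ ⟨hd, hud⟩ => ⟨hd, hvu.trans hud⟩

theorem exists_between (hP : IsContinuousPoset P) (h : WayBelow u x) :
    ∃ w, WayBelow u w ∧ WayBelow w x := by
  -- `x` is the directed supremum of all `v` with `v ≪ w ≪ x` for some `w`.
  let D : Set P := {v | ∃ w, WayBelow v w ∧ WayBelow w x}
  have hne : D.Nonempty := by
    obtain ⟨w, hw⟩ := (hP x).1
    obtain ⟨v, hv⟩ := (hP w).1
    exact ⟨v, w, hv, hw⟩
  have hdir : DirectedOn (· ≤ ·) D := by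
    rintro v₁ ⟨w₁, hv₁, hw₁⟩ v₂ ⟨w₂, hv₂, hw₂⟩
    obtain ⟨w, hw, hw₁w, hw₂w⟩ := (hP x).2.1 w₁ hw₁ w₂ hw₂
    obtain ⟨v, hv, hv₁v, hv₂v⟩ := (hP w).2.1 v₁ (hv₁.mono_right hw₁w) v₂ (hv₂.mono_right hw₂w)
    exact ⟨v, ⟨w, hv, hw⟩, hv₁v, hv₂v⟩
  have hlub : IsLUB D x := by
    refine ⟨fun v ⟨w, hv, hw⟩ => hv.le.trans hw.le, fun b hb => ?_⟩
    exact (hP x).2.2.2 fun w hw => (hP w).2.2.2 fun v hv => hb ⟨w, hv, hw⟩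
  obtain ⟨v, ⟨w, hvw, hwx⟩, huv⟩ := h D hne hdir x hlub le_rfl
  exact ⟨w, hvw.mono_left huv, hwx⟩

end WayBelow

section ScottCore

variable {P : Type*} [PartialOrder P] {γ γ' : P → P}
  (hγ' : ∀ x, IsLUB (γ '' {u | WayBelow u x}) (γ' x))
include hγ'

theorem apply_le_scottCore {u x : P} (hu : WayBelow u x) : γ u ≤ γ' x :=
  (hγ' x).1 ⟨u, hu, rfl⟩

theorem scottCore_monotone : Monotone γ' := fun _ _ hxy =>
  (hγ' _).2 <| Set.forall_mem_image.2 fun _ hu => apply_le_scottCore hγ' (hu.mono_right hxy)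

theorem scottCore_le (hγ : Monotone γ) (x : P) : γ' x ≤ γ x :=
  (hγ' x).2 <| Set.forall_mem_image.2 fun _ hu => hγ hu.le

theorem le_scottCore (hP : IsContinuousPoset P) (hγ : ∀ x, x ≤ γ x) (x : P) : x ≤ γ' x :=
  (hP x).2.2.2 fun u hu => (hγ u).trans (apply_le_scottCore hγ' hu)

theorem scottCore_idem (hP : IsContinuousPoset P) (hγ : IsClosureOp γ) (x : P) :
    γ' (γ' x) = γ' x := by
  obtain ⟨hmono, hinfl, hidem⟩ := hγ
  refine le_antisymm ((hγ' _).2 <| Set.forall_mem_image.2 fun v hv => ?_)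
    (le_scottCore hγ' hP hinfl _)
  obtain ⟨_, ⟨u, hu, rfl⟩, hvu⟩ :=
    hv _ ((hP x).1.image γ) ((hP x).2.1.mono_comp hmono) _ (hγ' x) le_rfl
  calc γ v ≤ γ (γ u) := hmono hvu
    _ = γ u := hidem u
    _ ≤ γ' x := apply_le_scottCore hγ' hu

theorem scottCore_isClosureOp (hP : IsContinuousPoset P) (hγ : IsClosureOp γ) :
    IsClosureOp γ' :=
  ⟨scottCore_monotone hγ', le_scottCore hγ' hP hγ.2.1, scottCore_idem hγ' hP hγ⟩

theorem scottCore_isScottContinuous (hP : IsContinuousPoset P) : IsScottContinuous γ' := by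
  intro D hne hdir s hs
  refine ⟨(scottCore_monotone hγ').mem_upperBounds_image hs.1, fun b hb => ?_⟩
  refine (hγ' s).2 <| Set.forall_mem_image.2 fun u hu => ?_
  obtain ⟨w, huw, hws⟩ := hu.exists_between hP
  obtain ⟨d, hd, hwd⟩ := hws D hne hdir s hs le_rfl
  exact (apply_le_scottCore hγ' (huw.mono_right hwd)).trans (hb ⟨d, hd, rfl⟩)

theorem le_scottCore_of_isScottContinuous (hP : IsContinuousPoset P) {β : P → P}
    (hβ : IsScottContinuous β) (hβγ : ∀ x, β x ≤ γ x) (x : P) : β x ≤ γ' x :=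
  (hβ _ (hP x).1 (hP x).2.1 x (hP x).2.2).2 <|
    Set.forall_mem_image.2 fun u hu => (hβγ u).trans (apply_le_scottCore hγ' hu)

end ScottCore

theorem stmt11 {P : Type*} [PartialOrder P] (hP : IsContinuousDcpo P)
    (γ : P → P) (hγ : IsClosureOp γ) :
    (∀ x : P, DirectedOn (· ≤ ·) (γ '' {u | WayBelow u x})) ∧
    ∀ γ' : P → P, (∀ x, IsLUB (γ '' {u | WayBelow u x}) (γ' x)) →
      IsClosureOp γ' ∧ IsScottContinuous γ' ∧ (∀ x, γ' x ≤ γ x) ∧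
      ∀ β : P → P, IsClosureOp β → IsScottContinuous β →
        (∀ x, β x ≤ γ x) → ∀ x, β x ≤ γ' x := by
  have hP : IsContinuousPoset P := hP.2
  refine ⟨fun x => (hP x).2.1.mono_comp hγ.1, fun γ' hγ' => ?_⟩
  exact ⟨scottCore_isClosureOp hγ' hP hγ, scottCore_isScottContinuous hγ' hP,
    scottCore_le hγ' hγ.1, fun β _ hβ hβγ => le_scottCore_of_isScottContinuous hγ' hP hβ hβγ⟩
end

section
/- Let C be a closure system in a domain P, and let dj(C) = {x ∈ P | x is the least upper bound of some nonempty directed subset of C}. Then dj(C) is the least directed-closed closure system in P containing C: dj(C) is a closure system containing C, dj(C) is closed under least upper bounds of its nonempty directed subsets, and dj(C) is contained in every closure system in P that contains C and is closed under least upper bounds of its nonempty directed subsets. -/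
/-- A closure system: every element has a least element of the system above it. -/
def IsClosureSystem {P : Type*} [PartialOrder P] (C : Set P) : Prop :=
  ∀ x : P, ∃ m, IsLeast {y | y ∈ C ∧ x ≤ y} m

/-- The set of least upper bounds of nonempty directed subsets of `C`. -/
def dirJoins {P : Type*} [PartialOrder P] (C : Set P) : Set P :=
  {x | ∃ D : Set P, D ⊆ C ∧ D.Nonempty ∧ DirectedOn (· ≤ ·) D ∧ IsLUB D x}

/-!
Write `cl` for the closure operator of `C`. For nonempty directed `D`, the set
`cl '' {u | ∃ d ∈ D, u ≪ d}` is a nonempty directed subset of `C`. By continuity every upper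
bound of it bounds `D`; conversely every upper bound `y ∈ dj(C)` of `D` bounds it, because if
`u ≪ d ≤ y` with `y` the join of a directed `E ⊆ C`, then `u ≤ e` for some `e ∈ E`, so
`cl u ≤ e ≤ y`. Hence for `D = {x}` its join is the least element of `dj(C)` above `x`, and for
directed `D ⊆ dj(C)` its join is `sup D`.
-/

section

variable {P : Type*} [PartialOrder P]

theorem WayBelow.trans_le {u x y : P} (h : WayBelow u x) (hxy : x ≤ y) : WayBelow u y :=
  fun D hD hdir s hs hys => h D hD hdir s hs (hxy.trans hys)

theorem subset_dirJoins (C : Set P) : C ⊆ dirJoins C := fun x hx =>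
  ⟨{x}, Set.singleton_subset_iff.2 hx, Set.singleton_nonempty x, directedOn_singleton x,
    isLUB_singleton⟩

theorem dirJoins_subset {B C : Set P} (hCB : C ⊆ B)
    (hB : ∀ D : Set P, D ⊆ B → D.Nonempty → DirectedOn (· ≤ ·) D → ∀ s, IsLUB D s → s ∈ B) :
    dirJoins C ⊆ B := by
  rintro x ⟨D, hDC, hD, hdir, hx⟩
  exact hB D (hDC.trans hCB) hD hdir x hx

section ClosureOperator

variable {C : Set P} {cl : P → P}

theorem monotone_of_isLeast_closure (hcl : ∀ x, IsLeast {y | y ∈ C ∧ x ≤ y} (cl x)) :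
    Monotone cl :=
  fun x y hxy => (hcl x).2 ⟨(hcl y).1.1, hxy.trans (hcl y).1.2⟩

theorem closure_le_of_wayBelow (hcl : ∀ x, IsLeast {y | y ∈ C ∧ x ≤ y} (cl x)) {u x y : P}
    (hy : y ∈ dirJoins C) (hu : WayBelow u x) (hxy : x ≤ y) : cl u ≤ y := by
  obtain ⟨E, hEC, hE, hdir, hyE⟩ := hy
  obtain ⟨e, he, hue⟩ := hu E hE hdir y hyE hxy
  exact ((hcl u).2 ⟨hEC he, hue⟩).trans (hyE.1 he)

def closedApprox (cl : P → P) (D : Set P) : Set P :=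
  cl '' {u | ∃ d ∈ D, WayBelow u d}

theorem closedApprox_subset (hcl : ∀ x, IsLeast {y | y ∈ C ∧ x ≤ y} (cl x)) (D : Set P) :
    closedApprox cl D ⊆ C := by
  rintro _ ⟨u, -, rfl⟩
  exact (hcl u).1.1

theorem closedApprox_nonempty (hne : ∀ x : P, {u | WayBelow u x}.Nonempty) {D : Set P}
    (hD : D.Nonempty) : (closedApprox cl D).Nonempty := by
  obtain ⟨d, hd⟩ := hD
  obtain ⟨u, hu⟩ := hne d
  exact ⟨cl u, u, ⟨d, hd, hu⟩, rfl⟩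

theorem directedOn_closedApprox (hmono : Monotone cl)
    (hdir : ∀ x : P, DirectedOn (· ≤ ·) {u | WayBelow u x}) {D : Set P}
    (hD : DirectedOn (· ≤ ·) D) : DirectedOn (· ≤ ·) (closedApprox cl D) := by
  rintro _ ⟨a, ⟨d₁, hd₁, ha⟩, rfl⟩ _ ⟨b, ⟨d₂, hd₂, hb⟩, rfl⟩
  obtain ⟨d, hd, hd₁d, hd₂d⟩ := hD d₁ hd₁ d₂ hd₂
  obtain ⟨c, hc, hac, hbc⟩ := hdir d a (ha.trans_le hd₁d) b (hb.trans_le hd₂d)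
  exact ⟨cl c, ⟨c, ⟨d, hd, hc⟩, rfl⟩, hmono hac, hmono hbc⟩

theorem upperBounds_closedApprox_subset (hle : ∀ x, x ≤ cl x)
    (hlub : ∀ x : P, IsLUB {u | WayBelow u x} x) (D : Set P) :
    upperBounds (closedApprox cl D) ⊆ upperBounds D := fun _ hb d hd =>
  (hlub d).2 fun u hu => (hle u).trans (hb ⟨u, ⟨d, hd, hu⟩, rfl⟩)

theorem mem_dirJoins_of_isLUB_closedApprox (hP : IsContinuousDcpo P)
    (hcl : ∀ x, IsLeast {y | y ∈ C ∧ x ≤ y} (cl x)) {D : Set P} (hD : D.Nonempty)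
    (hdir : DirectedOn (· ≤ ·) D) {s : P} (hs : IsLUB (closedApprox cl D) s) :
    s ∈ dirJoins C :=
  ⟨_, closedApprox_subset hcl D, closedApprox_nonempty (fun x => (hP.2 x).1) hD,
    directedOn_closedApprox (monotone_of_isLeast_closure hcl) (fun x => (hP.2 x).2.1) hdir, hs⟩

theorem isClosureSystem_dirJoins (hP : IsContinuousDcpo P)
    (hcl : ∀ x, IsLeast {y | y ∈ C ∧ x ≤ y} (cl x)) : IsClosureSystem (dirJoins C) := by
  intro x
  have hx : ({x} : Set P).Nonempty := Set.singleton_nonempty x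
  have hxdir : DirectedOn (· ≤ ·) ({x} : Set P) := directedOn_singleton x
  obtain ⟨m, hm⟩ := hP.1 _ (closedApprox_nonempty (cl := cl) (fun x => (hP.2 x).1) hx)
    (directedOn_closedApprox (monotone_of_isLeast_closure hcl) (fun x => (hP.2 x).2.1) hxdir)
  have hxm : x ≤ m :=
    upperBounds_closedApprox_subset (fun y => (hcl y).1.2) (fun y => (hP.2 y).2.2) _ hm.1 rfl
  refine ⟨m, ⟨mem_dirJoins_of_isLUB_closedApprox hP hcl hx hxdir hm, hxm⟩, ?_⟩
  rintro y ⟨hy, hxy⟩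
  refine hm.2 ?_
  rintro _ ⟨u, ⟨_, rfl, hu⟩, rfl⟩
  exact closure_le_of_wayBelow hcl hy hu hxy

theorem mem_dirJoins_of_isLUB (hP : IsContinuousDcpo P)
    (hcl : ∀ x, IsLeast {y | y ∈ C ∧ x ≤ y} (cl x))
    (D : Set P) (hDC : D ⊆ dirJoins C) (hD : D.Nonempty)
    (hdir : DirectedOn (· ≤ ·) D) (s : P) (hs : IsLUB D s) : s ∈ dirJoins C := by
  refine mem_dirJoins_of_isLUB_closedApprox hP hcl hD hdir ⟨?_, fun b hb => hs.2 ?_⟩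
  · rintro _ ⟨u, ⟨d, hd, hu⟩, rfl⟩
    exact (closure_le_of_wayBelow hcl (hDC hd) hu le_rfl).trans (hs.1 hd)
  · exact upperBounds_closedApprox_subset (fun y => (hcl y).1.2) (fun y => (hP.2 y).2.2) D hb

end ClosureOperator

end

theorem stmt12 {P : Type*} [PartialOrder P] (hP : IsContinuousDcpo P)
    (C : Set P) (hC : IsClosureSystem C) :
    IsClosureSystem (dirJoins C) ∧ C ⊆ dirJoins C ∧
    (∀ D : Set P, D ⊆ dirJoins C → D.Nonempty → DirectedOn (· ≤ ·) D →
      ∀ s, IsLUB D s → s ∈ dirJoins C) ∧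
    ∀ B : Set P, IsClosureSystem B → C ⊆ B →
      (∀ D : Set P, D ⊆ B → D.Nonempty → DirectedOn (· ≤ ·) D →
        ∀ s, IsLUB D s → s ∈ B) →
      dirJoins C ⊆ B := by
  choose cl hcl using hC
  exact ⟨isClosureSystem_dirJoins hP hcl, subset_dirJoins C,
    mem_dirJoins_of_isLUB hP hcl,
    fun B _ hCB hB => dirJoins_subset hCB hB⟩
end

section
/- Let P be a preframe, let β be a nucleus on P, and let Γ be a set of nuclei on P. Let δ be the closure operator on P sending each x to the least common fixed point of Γ above x (the join of Γ), and let δ′ be the closure operator on P sending each x to the least common fixed point of the family {x ↦ β(x) ⊓ γ(x) | γ ∈ Γ} above x (the join of the pointwise meets β ⊓ γ). Then β(x) ⊓ δ(x) = δ′(x) for every x ∈ P. (Hence binary meets distribute over arbitrary joins in the complete lattice of nuclei on a preframe: the nuclei on a preframe form a frame.) -/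
/-- A preframe: a meet-semilattice which is a dcpo and in which binary meets
distribute over directed joins. -/
def IsPreframe (P : Type*) [SemilatticeInf P] : Prop :=
  IsDcpo P ∧ ∀ (x : P) (D : Set P), D.Nonempty → DirectedOn (· ≤ ·) D →
    ∀ s, IsLUB D s → IsLUB ((fun d => x ⊓ d) '' D) (x ⊓ s)

/-- A nucleus on a meet-semilattice: a closure operator preserving binary meets. -/
def IsNucleusOn {P : Type*} [SemilatticeInf P] (ν : P → P) : Prop :=
  Monotone ν ∧ (∀ x, x ≤ ν x) ∧ (∀ x, ν (ν x) = ν x) ∧ ∀ x y, ν (x ⊓ y) = ν x ⊓ ν y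

theorem IsDcpo.exists_ge_mem_forall_apply_eq {P : Type*} [PartialOrder P] (hP : IsDcpo P)
    {Γ : Set (P → P)} (hΓ : ∀ γ ∈ Γ, ∀ y, y ≤ γ y) {A : Set P}
    (hΓA : ∀ γ ∈ Γ, Set.MapsTo γ A A)
    (hA : ∀ c ⊆ A, c.Nonempty → IsChain (· ≤ ·) c → ∀ s, IsLUB c s → s ∈ A)
    {x : P} (hx : x ∈ A) : ∃ m ∈ A, x ≤ m ∧ ∀ γ ∈ Γ, γ m = m := by
  have hchain : ∀ c ⊆ A, IsChain (· ≤ ·) c → ∀ y ∈ c, ∃ ub ∈ A, ∀ z ∈ c, z ≤ ub := by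
    intro c hcA hc y hy
    obtain ⟨s, hs⟩ := hP c ⟨y, hy⟩ hc.directedOn
    exact ⟨s, hA c hcA ⟨y, hy⟩ hc s hs, fun z hz => hs.1 hz⟩
  obtain ⟨m, hxm, hm⟩ := zorn_le_nonempty₀ A hchain x hx
  exact ⟨m, hm.prop, hxm, fun γ hγ =>
    (hm.eq_of_le (hΓA γ hγ hm.prop) (hΓ γ hγ m)).symm⟩

theorem IsPreframe.inf_le_of_isLUB {P : Type*} [SemilatticeInf P] (hP : IsPreframe P)
    {a b s : P} {D : Set P} (hne : D.Nonempty) (hD : DirectedOn (· ≤ ·) D) (hs : IsLUB D s)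
    (hDb : ∀ d ∈ D, a ⊓ d ≤ b) : a ⊓ s ≤ b :=
  (hP.2 a D hne hD s hs).2 (by rintro _ ⟨d, hd, rfl⟩; exact hDb d hd)

namespace IsNucleusOn

variable {P : Type*} [SemilatticeInf P] {ν : P → P}

theorem inf_apply_le_apply (hν : IsNucleusOn ν) {a y b : P} (h : a ⊓ y ≤ b) :
    a ⊓ ν y ≤ ν b :=
  calc a ⊓ ν y ≤ ν a ⊓ ν y := inf_le_inf_right _ (hν.2.1 a)
    _ = ν (a ⊓ y) := (hν.2.2.2 a y).symm
    _ ≤ ν b := hν.1 h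

theorem apply_inf_apply_eq {β : P → P} (hβ : IsNucleusOn β) (hν : IsNucleusOn ν) (a : P)
    {z : P} (hz : ν z = z) : β (β a ⊓ z) ⊓ ν (β a ⊓ z) = β a ⊓ z := by
  rw [hβ.2.2.2, hν.2.2.2, hβ.2.2.1, hz]
  exact le_antisymm (le_inf (inf_le_left.trans inf_le_left) (inf_le_right.trans inf_le_right))
    (le_inf (le_inf inf_le_left (inf_le_right.trans (hβ.2.1 z)))
      (le_inf (inf_le_left.trans (hν.2.1 _)) inf_le_right))

end IsNucleusOn

theorem stmt15 {P : Type*} [SemilatticeInf P] (hP : IsPreframe P)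
    (β : P → P) (hβ : IsNucleusOn β)
    (Γ : Set (P → P)) (hΓ : ∀ γ ∈ Γ, IsNucleusOn γ)
    (δ δ' : P → P)
    (hδ : ∀ x : P, IsLeast {y | (∀ γ ∈ Γ, γ y = y) ∧ x ≤ y} (δ x))
    (hδ' : ∀ x : P, IsLeast {y | (∀ γ ∈ Γ, β y ⊓ γ y = y) ∧ x ≤ y} (δ' x)) :
    ∀ x : P, β x ⊓ δ x = δ' x := by
  intro x
  obtain ⟨⟨hδ'fix, hxδ'⟩, -⟩ := hδ' x
  apply le_antisymm
  · have hΓA : ∀ γ ∈ Γ, Set.MapsTo γ {y | β x ⊓ y ≤ δ' x} {y | β x ⊓ y ≤ δ' x} :=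
      fun γ hγ y hy => calc
        β x ⊓ γ y ≤ β (δ' x) ⊓ γ (δ' x) :=
          le_inf (inf_le_left.trans (hβ.1 hxδ')) ((hΓ γ hγ).inf_apply_le_apply hy)
        _ = δ' x := hδ'fix γ hγ
    obtain ⟨m, hm, hxm, hmfix⟩ := hP.1.exists_ge_mem_forall_apply_eq
      (fun γ hγ => (hΓ γ hγ).2.1) hΓA
      (fun c hc hne hchain s hs => hP.inf_le_of_isLUB hne hchain.directedOn hs hc)
      (inf_le_right.trans hxδ' : β x ⊓ x ≤ δ' x)
    exact (inf_le_inf_left _ ((hδ x).2 ⟨hmfix, hxm⟩)).trans hm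
  · exact (hδ' x).2 ⟨fun γ hγ => hβ.apply_inf_apply_eq (hΓ γ hγ) x ((hδ x).1.1 γ hγ),
      le_inf (hβ.2.1 x) (hδ x).1.2⟩
end

section
/- Every Scott-open filter of a frame is nuclear: if L is a frame and V is a filter of L (that is, ⊤ ∈ V, V is closed under binary meets, and V is an upper set) which is inaccessible by directed joins (every nonempty directed subset D of L whose supremum lies in V intersects V), then there exists a nucleus ν on L such that V = {x ∈ L | ν(x) = ⊤}. -/
/-!
The elements `c` with `v ⇨ c = c` for every `v ∈ V` form a sublocale; take `ν` to be its
nucleus. If `v ≤ c` with `v ∈ V` and `c` fixed, then `⊤ = v ⇨ c = c`, so `ν` sends `V` to `⊤`.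
Conversely, for `x ∉ V`, Scott-openness lets Zorn's lemma produce `m ≥ x` maximal outside `V`.
For `v ∈ V` the element `v ⇨ m ≥ m` cannot lie in the filter `V`, as `v ⊓ (v ⇨ m) ≤ m`; so
maximality gives `v ⇨ m = m`. Thus `m` is fixed and `ν x ≤ m ≠ ⊤`.
-/

theorem DirSupClosed.exists_le_maximal {α : Type*} [CompleteLattice α] {s : Set α}
    (hs : DirSupClosed s) {x : α} (hx : x ∈ s) : ∃ m, x ≤ m ∧ Maximal (· ∈ s) m :=
  zorn_le_nonempty₀ s (fun c hcs hc y hy => ⟨sSup c,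
    dirSupClosed_iff_forall_sSup.1 hs hcs ⟨y, hy⟩ hc.directedOn, fun _ => le_sSup⟩) x hx

namespace Sublocale

variable {X : Type*} [Order.Frame X] {V : Set X} {c v x : X}

def himpFixed (V : Set X) : Sublocale X where
  carrier := {c | ∀ v ∈ V, v ⇨ c ≤ c}
  sInf_mem' s hs v hv :=
    le_sInf fun c hc => (himp_le_himp_left (sInf_le hc)).trans (hs hc v hv)
  himp_mem' a c hc v hv := by
    rw [himp_left_comm]
    exact himp_le_himp_left (hc v hv)

lemma toNucleus_le_of_le {S : Sublocale X} (hc : c ∈ S) (hxc : x ≤ c) : S.toNucleus x ≤ c :=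
  S.giRestrict.gc.l_le (b := ⟨c, hc⟩) hxc

lemma eq_top_of_mem_himpFixed (hc : c ∈ himpFixed V) (hv : v ∈ V) (hvc : v ≤ c) : c = ⊤ :=
  top_unique <| (himp_eq_top_iff.2 hvc).ge.trans (hc v hv)

lemma mem_himpFixed_of_maximal (hup : IsUpperSet V) (hinf : InfClosed V)
    (hc : Maximal (· ∉ V) c) : c ∈ himpFixed V := by
  intro v hv
  by_cases h : v ⇨ c ∈ V
  · exact (hc.1 (hup inf_himp_le (hinf hv h))).elim
  · exact hc.2 h le_himp

theorem toNucleus_himpFixed_eq_top_iff (htop : ⊤ ∈ V) (hup : IsUpperSet V)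
    (hinf : InfClosed V) (hV : DirSupInacc V) : (himpFixed V).toNucleus x = ⊤ ↔ x ∈ V := by
  refine ⟨fun hx => ?_, fun hx => ?_⟩
  · by_contra hxV
    obtain ⟨m, hxm, hm⟩ := hV.compl.exists_le_maximal hxV
    have hm_top : m = ⊤ :=
      top_unique <| hx ▸ toNucleus_le_of_le (mem_himpFixed_of_maximal hup hinf hm) hxm
    exact hm.1 (hm_top ▸ htop)
  · exact eq_top_of_mem_himpFixed ((himpFixed V).restrict x).2 hx
      (himpFixed V).toNucleus.le_apply

end Sublocale

theorem stmt17 {L : Type*} [Order.Frame L] (V : Set L)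
    (htop : ⊤ ∈ V)
    (hinf : ∀ x ∈ V, ∀ y ∈ V, x ⊓ y ∈ V)
    (hupper : ∀ x ∈ V, ∀ y : L, x ≤ y → y ∈ V)
    (hscott : ∀ D : Set L, D.Nonempty → DirectedOn (· ≤ ·) D →
      sSup D ∈ V → ∃ d ∈ D, d ∈ V) :
    ∃ ν : L → L, Monotone ν ∧ (∀ x, x ≤ ν x) ∧ (∀ x, ν (ν x) = ν x) ∧
      (∀ x y, ν (x ⊓ y) = ν x ⊓ ν y) ∧ V = {x | ν x = ⊤} := by
  have hup : IsUpperSet V := fun x y hxy hx => hupper x hx y hxy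
  have hV : DirSupInacc V := dirSupInacc_iff_forall_sSup.2 fun D hD hdir hsup =>
    let ⟨d, hdD, hdV⟩ := hscott D hD hdir hsup
    ⟨d, hdD, hdV⟩
  set ν := (Sublocale.himpFixed V).toNucleus
  refine ⟨ν, ν.monotone, fun _ => ν.le_apply, fun _ => ν.idempotent _, fun _ _ => ν.map_inf, ?_⟩
  ext x
  exact (Sublocale.toNucleus_himpFixed_eq_top_iff htop hup hinf hV).symm
end

section
/- Let P be a dcpo. For a subset X of P, let clsys(X) denote the least closure system in P containing X (which exists since the intersection of any family of closure systems in a dcpo is a closure system). Then the closure operator X ↦ clsys(X) on the powerset of P is convex, i.e., satisfies the anti-exchange condition: for every closure system C in P and all x, y ∈ P with x ∉ C and y ∉ C, if clsys(C ∪ {x}) = clsys(C ∪ {y}) then x = y. -/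
/-- The least closure system containing `X`: the intersection of all closure
systems containing `X`. -/
def clsysOf {P : Type*} [PartialOrder P] (X : Set P) : Set P :=
  {y | ∀ C : Set P, IsClosureSystem C → X ⊆ C → y ∈ C}

section ClosureSystem

variable {P : Type*} [PartialOrder P] {C : Set P}

lemma subset_clsysOf (X : Set P) : X ⊆ clsysOf X :=
  fun _ hx _ _ hXC => hXC hx

lemma IsClosureSystem.union_Iic (hC : IsClosureSystem C) (z : P) :
    IsClosureSystem (C ∪ Set.Iic z) := by
  intro p
  by_cases hpz : p ≤ z
  · exact ⟨p, ⟨Or.inr hpz, le_rfl⟩, fun _ hq => hq.2⟩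
  · obtain ⟨m, ⟨hmC, hpm⟩, hm_least⟩ := hC p
    refine ⟨m, ⟨Or.inl hmC, hpm⟩, ?_⟩
    rintro q ⟨hqC | hqz, hpq⟩
    · exact hm_least ⟨hqC, hpq⟩
    · exact absurd (hpq.trans hqz) hpz

lemma IsClosureSystem.le_of_mem_clsysOf_union_singleton (hC : IsClosureSystem C) {x y : P}
    (hx : x ∉ C) (hmem : x ∈ clsysOf (C ∪ {y})) : x ≤ y :=
  (hmem _ (hC.union_Iic y) (Set.union_subset_union_right C (by simp))).resolve_left hx

end ClosureSystem

theorem stmt19_general {P : Type*} [PartialOrder P]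
    (C : Set P) (hC : IsClosureSystem C)
    (x y : P) (hx : x ∉ C) (hy : y ∉ C)
    (heq : clsysOf (C ∪ {x}) = clsysOf (C ∪ {y})) : x = y := by
  have hx_mem : x ∈ clsysOf (C ∪ {x}) := subset_clsysOf _ (Or.inr rfl)
  have hy_mem : y ∈ clsysOf (C ∪ {y}) := subset_clsysOf _ (Or.inr rfl)
  exact le_antisymm (hC.le_of_mem_clsysOf_union_singleton hx (heq ▸ hx_mem))
    (hC.le_of_mem_clsysOf_union_singleton hy (heq ▸ hy_mem))

theorem stmt19 {P : Type*} [PartialOrder P] (hP : IsDcpo P)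
    (C : Set P) (hC : IsClosureSystem C)
    (x y : P) (hx : x ∉ C) (hy : y ∉ C)
    (heq : clsysOf (C ∪ {x}) = clsysOf (C ∪ {y})) : x = y :=
  stmt19_general C hC x y hx hy heq
end
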